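/- arXiv:2509.14881 — 2 statements merged into one kernel-verified Lean document; each statement's English description precedes it below -/
import Mathlib

section
/- Let G be a finite group with depth function d, H ≤ G a subgroup, and suppose σ ∈ G satisfies d(σ) = max{d(στ) : τ ∈ H}. Then for every τ ∈ H, d(στ) = min(d(τ), d(σ)) whenever d(στ) < d(σ), and consequently Σ_{τ∈H} d(στ) = Σ_{τ∈H} min(d(τ), max_{ρ∈H} d(σρ)). -/
noncomputable section
open scoped Classical

/-- Abstract coset-depth lemma. -/
theorem coset_depth {G : Type*} [Group G] [Fintype G]
    (d : G → WithTop ℝ) (H : Subgroup G)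
    (h_inv : ∀ σ : G, d σ⁻¹ = d σ)
    (h_mul : ∀ σ τ : G, min (d σ) (d τ) ≤ d (σ * τ))
    (h_eq : ∀ σ τ : G, d σ ≠ d τ → d (σ * τ) = min (d σ) (d τ))
    (σ : G) (hσmax : ∀ τ ∈ H, d (σ * τ) ≤ d σ) :
    (∀ τ ∈ H, d (σ * τ) < d σ → d (σ * τ) = min (d τ) (d σ)) ∧
    ∑ τ : H, d (σ * (τ : G)) = ∑ τ : H, min (d (τ : G)) (d σ) := by
  have key : ∀ τ : G, d (σ * τ) < d σ → d (σ * τ) = d τ := by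
    intro τ hlt
    by_contra hne
    have h1 : d (σ * τ * τ⁻¹) = min (d (σ * τ)) (d τ⁻¹) := by
      apply h_eq
      rw [h_inv]; exact hne
    rw [mul_inv_cancel_right, h_inv] at h1
    have : d σ ≤ d (σ * τ) := h1 ▸ min_le_left _ _
    exact absurd hlt (not_lt.mpr this)
  have key2 : ∀ τ : G, d (σ * τ) ≤ d σ → d (σ * τ) = min (d τ) (d σ) := by
    intro τ hle
    rcases lt_or_eq_of_le hle with hlt | heq
    · rw [key τ hlt]
      exact (min_eq_left ((key τ hlt) ▸ hlt.le)).symm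
    · -- d (σ * τ) = d σ; show d τ ≥ d σ
      have hτ : d σ ≤ d τ := by
        have := h_mul σ⁻¹ (σ * τ)
        rw [inv_mul_cancel_left, h_inv, heq, min_self] at this
        exact this
      rw [heq, min_eq_right hτ]
  refine ⟨fun τ _ hlt => key2 τ hlt.le, ?_⟩
  apply Finset.sum_congr rfl
  intro τ _
  exact key2 τ (hσmax τ τ.2)
end
end

section
/- Let t ↦ g(t) := t − ψ(t) where ψ is the inverse of a normalized Herbrand-type function φ(x) = Σ_{σ∈G} min(d(σ), x) for a finite group G with depth function d, and let ℓ := max{d(σ) : σ ≠ 1} (assumed finite) and u := φ(ℓ). Then g is nondecreasing on ℝ≥0, strictly increasing on [0,u), and constant equal to u − ℓ on [u,∞). -/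
/-!
Split off the term of `σ = 1`: `φ x = x + E x` with `E x = ∑_{σ ≠ 1} min (d σ) x`. Then `E` is
monotone, strictly increasing on `(-∞, ℓ]` (through the term of a `σ` of depth `ℓ`) and constant
on `[ℓ, ∞)`, and `t - ψ t = E (ψ t)`. As `φ` is strictly increasing on all of `ℝ`, so is `ψ` on
`[0, ∞)`, with `ψ u = ℓ`; the three claims follow by composition.
-/

noncomputable section
open scoped Classical

/-- The abstract normalized Herbrand function
`phi(x) = sum over G of min(d sigma, x)` of a finite group with depth function `d`. -/
def herbrandAbs {G : Type*} [Fintype G] (d : G → WithTop ℝ) (x : ℝ) : ℝ :=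
  ∑ σ : G, WithTop.untopD 0 (min (d σ) (x : WithTop ℝ))

open Finset Set

theorem WithTop.untopD_min_coe_of_ne_top {α : Type*} [LinearOrder α] {a : WithTop α}
    (ha : a ≠ ⊤) (e x : α) : (min a (x : WithTop α)).untopD e = min (a.untopD e) x := by
  lift a to α using ha
  rw [← WithTop.coe_min, WithTop.untopD_coe, WithTop.untopD_coe]

theorem StrictMono.strictMonoOn_of_rightInvOn {α β : Type*} [LinearOrder α] [Preorder β]
    {φ : α → β} {ψ : β → α} {s : Set β} (hφ : StrictMono φ) (h : RightInvOn ψ φ s) :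
    StrictMonoOn ψ s :=
  fun _ ht _ ht' htt' => hφ.lt_iff_lt.mp (by rwa [h ht, h ht'])

section Herbrand

variable {G : Type*} [Fintype G] (d : G → WithTop ℝ)

theorem herbrandAbs_zero (hd0 : ∀ σ, 0 ≤ d σ) : herbrandAbs d 0 = 0 := by
  refine Finset.sum_eq_zero fun σ _ => ?_
  rw [WithTop.coe_zero, min_eq_right (hd0 σ)]
  rfl

variable [One G]

def herbrandExcess (x : ℝ) : ℝ :=
  ∑ σ ∈ univ.erase 1, min ((d σ).untopD 0) x

theorem herbrandAbs_eq_add_herbrandExcess (hdtop : ∀ σ, d σ = ⊤ ↔ σ = 1) (x : ℝ) :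
    herbrandAbs d x = x + herbrandExcess d x := by
  rw [herbrandAbs, ← Finset.add_sum_erase _ _ (mem_univ 1), (hdtop 1).mpr rfl, top_inf_eq,
    WithTop.untopD_coe]
  refine congrArg _ (Finset.sum_congr rfl fun σ hσ => ?_)
  exact WithTop.untopD_min_coe_of_ne_top ((hdtop σ).not.mpr (Finset.ne_of_mem_erase hσ)) 0 x

theorem monotone_herbrandExcess : Monotone (herbrandExcess d) :=
  fun _ _ hxy => Finset.sum_le_sum fun _ _ => min_le_min_left _ hxy

theorem strictMonoOn_herbrandExcess {ℓ : ℝ} {σ₀ : G} (hσ₀ : σ₀ ≠ 1) (hdσ₀ : d σ₀ = ℓ) :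
    StrictMonoOn (herbrandExcess d) (Iic ℓ) := by
  intro x _ y hy hxy
  refine Finset.sum_lt_sum (fun _ _ => min_le_min_left _ hxy.le)
    ⟨σ₀, Finset.mem_erase.mpr ⟨hσ₀, mem_univ _⟩, ?_⟩
  rw [hdσ₀, WithTop.untopD_coe, min_eq_right (hxy.le.trans hy), min_eq_right hy]
  exact hxy

theorem herbrandExcess_eq_of_le {ℓ x : ℝ} (hub : ∀ σ ≠ 1, d σ ≤ ℓ) (hx : ℓ ≤ x) :
    herbrandExcess d x = herbrandExcess d ℓ := by
  refine Finset.sum_congr rfl fun σ hσ => ?_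
  have hσℓ := hub σ (Finset.ne_of_mem_erase hσ)
  lift d σ to ℝ using ne_top_of_le_ne_top WithTop.coe_ne_top hσℓ with r
  rw [WithTop.untopD_coe, min_eq_left (WithTop.coe_le_coe.mp hσℓ),
    min_eq_left ((WithTop.coe_le_coe.mp hσℓ).trans hx)]

theorem strictMono_herbrandAbs (hdtop : ∀ σ, d σ = ⊤ ↔ σ = 1) : StrictMono (herbrandAbs d) := by
  rw [funext (herbrandAbs_eq_add_herbrandExcess d hdtop)]
  exact strictMono_id.add_monotone (monotone_herbrandExcess d)

end Herbrand

theorem sub_psi_monotone_general {G : Type*} [Group G] [Fintype G]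
    (d : G → WithTop ℝ)
    (hd0 : ∀ σ : G, 0 ≤ d σ)
    (hdtop : ∀ σ : G, d σ = ⊤ ↔ σ = 1)
    (ℓ : ℝ) (hℓ : IsGreatest {x : ℝ | ∃ σ : G, σ ≠ 1 ∧ d σ = (x : WithTop ℝ)} ℓ)
    (ψ : ℝ → ℝ)
    (hψ : Set.InvOn ψ (herbrandAbs d) (Set.Ici 0) (Set.Ici 0)) :
    MonotoneOn (fun t => t - ψ t) (Set.Ici 0) ∧
    StrictMonoOn (fun t => t - ψ t) (Set.Ico 0 (herbrandAbs d ℓ)) ∧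
    ∀ t : ℝ, herbrandAbs d ℓ ≤ t → t - ψ t = herbrandAbs d ℓ - ℓ := by
  obtain ⟨⟨σ₀, hσ₀, hdσ₀⟩, hmax⟩ := hℓ
  have hℓ0 : 0 ≤ ℓ := WithTop.coe_nonneg.mp (hdσ₀ ▸ hd0 σ₀)
  have hub : ∀ σ ≠ 1, d σ ≤ ℓ := fun σ hσ => by
    obtain ⟨r, hr⟩ := WithTop.ne_top_iff_exists.mp ((hdtop σ).not.mpr hσ)
    exact hr ▸ WithTop.coe_le_coe.mpr (hmax ⟨σ, hσ, hr.symm⟩)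
  have hφ := herbrandAbs_eq_add_herbrandExcess d hdtop
  have hψmono := (strictMono_herbrandAbs d hdtop).strictMonoOn_of_rightInvOn hψ.2
  have hψu : ψ (herbrandAbs d ℓ) = ℓ := hψ.1 hℓ0
  have hu0 : 0 ≤ herbrandAbs d ℓ :=
    herbrandAbs_zero d hd0 ▸ (strictMono_herbrandAbs d hdtop).monotone hℓ0
  have hg : EqOn (herbrandExcess d ∘ ψ) (fun t => t - ψ t) (Ici 0) := fun t ht => by
    have := hφ (ψ t)
    rw [hψ.2 ht] at this
    simp only [Function.comp_apply]
    linarith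
  refine ⟨((monotone_herbrandExcess d).comp_monotoneOn hψmono.monotoneOn).congr hg, ?_, ?_⟩
  · refine ((strictMonoOn_herbrandExcess d hσ₀ hdσ₀).comp (hψmono.mono Ico_subset_Ici_self)
      fun t ht => ?_).congr (hg.mono Ico_subset_Ici_self)
    exact hψu ▸ (hψmono ht.1 hu0 ht.2).le
  · intro t ht
    have ht0 : 0 ≤ t := hu0.trans ht
    calc t - ψ t = herbrandExcess d (ψ t) := (hg ht0).symm
      _ = herbrandExcess d ℓ :=
        herbrandExcess_eq_of_le d hub (hψu ▸ hψmono.monotoneOn hu0 ht0 ht)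
      _ = herbrandAbs d ℓ - ℓ := by rw [hφ ℓ]; ring

/-- Monotonicity of `t - ψ t` for the inverse `ψ` of an abstract normalized
Herbrand function: nondecreasing on `[0,∞)`, strictly increasing on `[0,u)`
where `u = φ(ℓ)` and `ℓ` is the largest finite depth, and constant `u - ℓ`
on `[u,∞)`. -/
theorem sub_psi_monotone {G : Type*} [Group G] [Fintype G] [Nontrivial G]
    (d : G → WithTop ℝ)
    (hd0 : ∀ σ : G, 0 ≤ d σ)
    (hdtop : ∀ σ : G, d σ = ⊤ ↔ σ = 1)
    (ℓ : ℝ) (hℓ : IsGreatest {x : ℝ | ∃ σ : G, σ ≠ 1 ∧ d σ = (x : WithTop ℝ)} ℓ)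
    (ψ : ℝ → ℝ)
    (hψ : Set.InvOn ψ (herbrandAbs d) (Set.Ici 0) (Set.Ici 0))
    (hψmap : Set.MapsTo ψ (Set.Ici 0) (Set.Ici 0))
    (hφmap : Set.MapsTo (herbrandAbs d) (Set.Ici 0) (Set.Ici 0)) :
    MonotoneOn (fun t => t - ψ t) (Set.Ici 0) ∧
    StrictMonoOn (fun t => t - ψ t) (Set.Ico 0 (herbrandAbs d ℓ)) ∧
    ∀ t : ℝ, herbrandAbs d ℓ ≤ t → t - ψ t = herbrandAbs d ℓ - ℓ :=
  sub_psi_monotone_general d hd0 hdtop ℓ hℓ ψ hψ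
end
end
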